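/- Let Θ : Ω → Ψ be measurable and {P_θ}_{θ∈Ψ} a disintegration of P over P_Θ consistent with Θ. Let I be countable, T countably generated, and {X_i}_{i∈I} measurable maps Ω → Y. Then {X_i}_{i∈I} is P-conditionally i.i.d. given Θ if and only if for P_Θ-almost all θ∈Ψ the family {X_i}_{i∈I} is i.i.d. under P_θ. -/

import Mathlib

open MeasureTheory Set

/-- Conditional independence of a family of measurable maps over a σ-algebra `F`. -/
def CondIndepFam {Ω Y I : Type*} [MeasurableSpace Ω] (mY : MeasurableSpace Y)
    (P : Measure Ω) (F : MeasurableSpace Ω) (X : I → Ω → Y) : Prop :=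
  ∀ (n : ℕ) (idx : Fin n → I), Function.Injective idx →
    ∀ E : Fin n → Set Ω,
      (∀ j, MeasurableSet[MeasurableSpace.comap (X (idx j)) mY] (E j)) →
      P[Set.indicator (⋂ j, E j) (fun _ => (1 : ℝ)) | F]
        =ᵐ[P] fun ω => ∏ j, (P[Set.indicator (E j) (fun _ => (1 : ℝ)) | F]) ω

/-!
Conditioning on `Θ` is evaluation of the disintegration: `P[1_D | σ(Θ)] = P_{Θ(·)}(D)` almost
surely, because consistency gives `∫_{Θ⁻¹A} P_{Θ(ω)}(D) dP = P(Θ⁻¹A ∩ D)`. So every product identity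
of conditional independence and every identity of conditional identical distribution holds for
`P_Θ`-almost every `θ`. As `I` is countable and `T` has a countable generating π-system, countably
many of these identities suffice, one null set serves them all, and the π-λ theorem turns them
into independence and equality of laws under `P_θ`.
-/

open ProbabilityTheory

theorem Set.Countable.generatePiSystem {α : Type*} {S : Set (Set α)} (hS : S.Countable) :
    (generatePiSystem S).Countable := by
  refine ((countable_ofPred_finite_subset hS).image sInter).mono fun t ht => ?_
  induction ht with
  | @base s hs => exact ⟨{s}, ⟨finite_singleton s, singleton_subset_iff.2 hs⟩, sInter_singleton s⟩
  | @inter s u _ _ _ ihs ihu =>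
    obtain ⟨T₁, ⟨hT₁, hT₁S⟩, rfl⟩ := ihs
    obtain ⟨T₂, ⟨hT₂, hT₂S⟩, rfl⟩ := ihu
    exact ⟨T₁ ∪ T₂, ⟨hT₁.union hT₂, union_subset hT₁S hT₂S⟩, sInter_union T₁ T₂⟩

theorem MeasurableSpace.exists_countable_isPiSystem_generateFrom_eq (Y : Type*)
    [mY : MeasurableSpace Y] [CountablyGenerated Y] :
    ∃ π : Set (Set Y), π.Countable ∧ IsPiSystem π ∧ generateFrom π = mY :=
  ⟨generatePiSystem (countableGeneratingSet Y), countable_countableGeneratingSet.generatePiSystem,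
    isPiSystem_generatePiSystem _,
    by rw [generateFrom_generatePiSystem_eq, generateFrom_countableGeneratingSet]⟩

theorem ProbabilityTheory.iIndepFun_of_isPiSystem {Ω Y I : Type*} [MeasurableSpace Ω]
    [mY : MeasurableSpace Y] {μ : Measure Ω} {π : Set (Set Y)} (hπ : IsPiSystem π)
    (hgen : MeasurableSpace.generateFrom π = mY) {X : I → Ω → Y} (hX : ∀ i, Measurable (X i))
    (h : ∀ (n : ℕ) (idx : Fin n → I), Function.Injective idx → ∀ B : Fin n → π,
      μ (⋂ j, X (idx j) ⁻¹' B j) = ∏ j, μ (X (idx j) ⁻¹' B j)) :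
    iIndepFun X μ := by
  rw [iIndepFun_iff_iIndep]
  refine iIndepSets.iIndep (fun i => (hX i).comap_le) (fun i => preimage (X i) '' π)
    (fun i => hπ.comap (X i)) (fun i => by rw [← hgen, MeasurableSpace.comap_generateFrom]) ?_
  rw [iIndepSets_iff]
  intro s f hf
  choose B hBπ hBf using hf
  let e : Fin s.card ≃ s := s.equivFin.symm
  have hcard := h s.card (fun j => e j) (Subtype.val_injective.comp e.injective)
    fun j => ⟨B (e j) (e j).2, hBπ _ _⟩
  simp only [hBf] at hcard
  rw [e.surjective.iInter_comp (fun i : s => f i), e.prod_comp (fun i : s => μ (f i)),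
    Finset.prod_coe_sort s (fun i => μ (f i))] at hcard
  rw [← hcard]
  simp only [iInter_subtype]

/-- `Pd θ` is the paper's `P_θ`; the last field is consistency with `Θ`. -/
structure IsDisintegration {Ω Ψ : Type*} [MeasurableSpace Ω] [MeasurableSpace Ψ]
    (P : Measure Ω) (Θ : Ω → Ψ) (Pd : Ψ → Measure Ω) : Prop where
  isProbabilityMeasure : ∀ θ, IsProbabilityMeasure (Pd θ)
  measurable_apply : ∀ D : Set Ω, MeasurableSet D → Measurable fun θ => Pd θ D
  lintegral_apply : ∀ D : Set Ω, MeasurableSet D → ∫⁻ θ, Pd θ D ∂(P.map Θ) = P D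
  ae_apply_preimage : ∀ D : Set Ψ, MeasurableSet D →
    ∀ᵐ θ ∂(P.map Θ).restrict D, Pd θ (Θ ⁻¹' D) = 1

namespace IsDisintegration

variable {Ω Ψ : Type*} [MeasurableSpace Ω] [mΨ : MeasurableSpace Ψ] {P : Measure Ω}
  {Θ : Ω → Ψ} {Pd : Ψ → Measure Ω}

theorem setLIntegral_apply (hPd : IsDisintegration P Θ Pd) (hΘ : Measurable Θ) {A : Set Ψ}
    (hA : MeasurableSet A) {D : Set Ω} (hD : MeasurableSet D) :
    ∫⁻ θ in A, Pd θ D ∂(P.map Θ) = P (Θ ⁻¹' A ∩ D) := by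
  have := hPd.isProbabilityMeasure
  have h_in : ∀ᵐ θ ∂(P.map Θ).restrict A, Pd θ (Θ ⁻¹' A ∩ D) = Pd θ D := by
    filter_upwards [hPd.ae_apply_preimage A hA] with θ hθ
    rw [inter_comm, measure_inter_conull ((prob_compl_eq_zero_iff (hΘ hA)).2 hθ)]
  have h_out : ∀ᵐ θ ∂(P.map Θ).restrict Aᶜ, Pd θ (Θ ⁻¹' A ∩ D) = 0 := by
    filter_upwards [hPd.ae_apply_preimage Aᶜ hA.compl] with θ hθ
    rw [← prob_compl_eq_zero_iff (hΘ hA.compl), preimage_compl, compl_compl] at hθ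
    exact measure_inter_null_of_null_left D hθ
  calc ∫⁻ θ in A, Pd θ D ∂(P.map Θ) = ∫⁻ θ in A, Pd θ (Θ ⁻¹' A ∩ D) ∂(P.map Θ) :=
        (lintegral_congr_ae h_in).symm
    _ = ∫⁻ θ, Pd θ (Θ ⁻¹' A ∩ D) ∂(P.map Θ) := by
        rw [← lintegral_add_compl (μ := P.map Θ) _ hA, lintegral_congr_ae h_out, lintegral_zero,
          add_zero]
    _ = P (Θ ⁻¹' A ∩ D) := hPd.lintegral_apply _ ((hΘ hA).inter hD)

theorem condExp_indicator_ae_eq [IsFiniteMeasure P] (hPd : IsDisintegration P Θ Pd)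
    (hΘ : Measurable Θ) {D : Set Ω} (hD : MeasurableSet D) :
    P[D.indicator (fun _ => (1 : ℝ)) | MeasurableSpace.comap Θ mΨ]
      =ᵐ[P] fun ω => (Pd (Θ ω) D).toReal := by
  have := hPd.isProbabilityMeasure
  have hmeas : Measurable fun θ => Pd θ D := hPd.measurable_apply D hD
  have hint : Integrable (fun ω => (Pd (Θ ω) D).toReal) P :=
    .of_bound (hmeas.ennreal_toReal.comp hΘ).aestronglyMeasurable 1
      (.of_forall fun ω => by
        simpa using ENNReal.toReal_le_of_le_ofReal zero_le_one (by simpa using prob_le_one))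
  refine (ae_eq_condExp_of_forall_setIntegral_eq hΘ.comap_le
    ((integrable_const (1 : ℝ)).indicator hD) (fun _ _ _ => hint.integrableOn) ?_
    (hmeas.ennreal_toReal.comp (comap_measurable Θ)).aestronglyMeasurable).symm
  rintro _ ⟨A, hA, rfl⟩ -
  rw [integral_toReal (f := fun ω => Pd (Θ ω) D) (hmeas.comp hΘ).aemeasurable.restrict
      (.of_forall fun _ => measure_lt_top _ _),
    ← setLIntegral_map hA hmeas hΘ, hPd.setLIntegral_apply hΘ hA hD, setIntegral_indicator hD,
    setIntegral_const, smul_eq_mul, mul_one, measureReal_def]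

theorem condExp_iInter_ae_eq_prod_iff [IsFiniteMeasure P] (hPd : IsDisintegration P Θ Pd)
    (hΘ : Measurable Θ) {ι : Type*} [Fintype ι] {D : ι → Set Ω} (hD : ∀ j, MeasurableSet (D j)) :
    (P[(⋂ j, D j).indicator (fun _ => (1 : ℝ)) | MeasurableSpace.comap Θ mΨ]
        =ᵐ[P] fun ω =>
          ∏ j, (P[(D j).indicator (fun _ => (1 : ℝ)) | MeasurableSpace.comap Θ mΨ]) ω)
      ↔ ∀ᵐ θ ∂(P.map Θ), Pd θ (⋂ j, D j) = ∏ j, Pd θ (D j) := by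
  have := hPd.isProbabilityMeasure
  have hprod : (fun ω => ∏ j, (P[(D j).indicator (fun _ => (1 : ℝ)) |
      MeasurableSpace.comap Θ mΨ]) ω) =ᵐ[P] fun ω => (∏ j, Pd (Θ ω) (D j)).toReal := by
    filter_upwards [ae_all_iff.2 fun j => hPd.condExp_indicator_ae_eq hΘ (hD j)] with ω hω
    simp only [hω, ENNReal.toReal_prod]
  rw [(hPd.condExp_indicator_ae_eq hΘ (.iInter hD)).congr_left, hprod.congr_right,
    ae_map_iff hΘ.aemeasurable (measurableSet_eq_fun (hPd.measurable_apply _ (.iInter hD))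
      (Finset.measurable_prod _ fun j _ => hPd.measurable_apply _ (hD j)))]
  exact Filter.eventually_congr (.of_forall fun ω => ENNReal.toReal_eq_toReal_iff'
    (measure_ne_top _ _) (ENNReal.prod_ne_top fun j _ => measure_ne_top _ _))

theorem ae_eq_iff_forall_measure_preimage_inter_eq [IsFiniteMeasure P]
    (hPd : IsDisintegration P Θ Pd) (hΘ : Measurable Θ) {D₁ D₂ : Set Ω} (hD₁ : MeasurableSet D₁)
    (hD₂ : MeasurableSet D₂) :
    (∀ᵐ θ ∂(P.map Θ), Pd θ D₁ = Pd θ D₂) ↔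
      ∀ A : Set Ψ, MeasurableSet A → P (Θ ⁻¹' A ∩ D₁) = P (Θ ⁻¹' A ∩ D₂) := by
  refine ⟨fun h A hA => ?_, fun h => ?_⟩
  · rw [← hPd.setLIntegral_apply hΘ hA hD₁, ← hPd.setLIntegral_apply hΘ hA hD₂]
    exact lintegral_congr_ae (ae_restrict_of_ae h)
  · refine ae_eq_of_forall_setLIntegral_eq_of_sigmaFinite (hPd.measurable_apply _ hD₁)
      (hPd.measurable_apply _ hD₂) fun A hA _ => ?_
    rw [hPd.setLIntegral_apply hΘ hA hD₁, hPd.setLIntegral_apply hΘ hA hD₂, h A hA]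

section Family

variable [IsFiniteMeasure P] {Y I : Type*} [mY : MeasurableSpace Y] {X : I → Ω → Y}

theorem condIndepFam_iff_forall_ae (hPd : IsDisintegration P Θ Pd) (hΘ : Measurable Θ)
    (hX : ∀ i, Measurable (X i)) :
    CondIndepFam mY P (MeasurableSpace.comap Θ mΨ) X ↔
      ∀ (n : ℕ) (idx : Fin n → I), Function.Injective idx → ∀ E : Fin n → Set Ω,
        (∀ j, MeasurableSet[MeasurableSpace.comap (X (idx j)) mY] (E j)) →
          ∀ᵐ θ ∂(P.map Θ), Pd θ (⋂ j, E j) = ∏ j, Pd θ (E j) :=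
  forall₄_congr fun _ idx _ _ => forall_congr' fun hE =>
    hPd.condExp_iInter_ae_eq_prod_iff hΘ fun j => (hX (idx j)).comap_le _ (hE j)

variable [MeasurableSpace.CountablyGenerated Y] [Countable I]

theorem condIndepFam_iff_ae_iIndepFun (hPd : IsDisintegration P Θ Pd) (hΘ : Measurable Θ)
    (hX : ∀ i, Measurable (X i)) :
    CondIndepFam mY P (MeasurableSpace.comap Θ mΨ) X ↔ ∀ᵐ θ ∂(P.map Θ), iIndepFun X (Pd θ) := by
  rw [hPd.condIndepFam_iff_forall_ae hΘ hX]
  refine ⟨fun h => ?_, fun h n idx hidx E hE => ?_⟩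
  · obtain ⟨π, hπc, hπ, hgen⟩ := MeasurableSpace.exists_countable_isPiSystem_generateFrom_eq Y
    have := hπc.to_subtype
    have h' : ∀ᵐ θ ∂(P.map Θ), ∀ (n : ℕ) (idx : Fin n → I), Function.Injective idx →
        ∀ B : Fin n → π, Pd θ (⋂ j, X (idx j) ⁻¹' B j) = ∏ j, Pd θ (X (idx j) ⁻¹' B j) := by
      simp only [ae_all_iff, Filter.eventually_imp_distrib_left]
      exact fun n idx hidx B => h n idx hidx _ fun j =>
        ⟨B j, hgen ▸ MeasurableSpace.measurableSet_generateFrom (B j).2, rfl⟩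
    filter_upwards [h'] with θ hθ
    exact iIndepFun_of_isPiSystem hπ hgen hX hθ
  · filter_upwards [h] with θ hθ
    exact (hθ.precomp hidx).meas_iInter hE

theorem forall_measure_inter_preimage_eq_iff_ae_map_eq (hPd : IsDisintegration P Θ Pd)
    (hΘ : Measurable Θ) (hX : ∀ i, Measurable (X i)) :
    (∀ i j : I, ∀ F : Set Ω, MeasurableSet[MeasurableSpace.comap Θ mΨ] F →
        ∀ B : Set Y, MeasurableSet B → P (F ∩ X i ⁻¹' B) = P (F ∩ X j ⁻¹' B)) ↔
      ∀ᵐ θ ∂(P.map Θ), ∀ i j : I, (Pd θ).map (X i) = (Pd θ).map (X j) := by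
  have := hPd.isProbabilityMeasure
  refine ⟨fun h => ?_, fun h i j _ ⟨A, hA, hF⟩ B hB => ?_⟩
  · obtain ⟨π, hπc, hπ, hgen⟩ := MeasurableSpace.exists_countable_isPiSystem_generateFrom_eq Y
    have := hπc.to_subtype
    have hπmeas : ∀ B ∈ π, MeasurableSet B := fun B hB =>
      hgen ▸ MeasurableSpace.measurableSet_generateFrom hB
    have h' : ∀ᵐ θ ∂(P.map Θ), ∀ i j : I, ∀ B : π, Pd θ (X i ⁻¹' B) = Pd θ (X j ⁻¹' B) := by
      simp only [ae_all_iff]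
      exact fun i j B => (hPd.ae_eq_iff_forall_measure_preimage_inter_eq hΘ
        (hX i (hπmeas _ B.2)) (hX j (hπmeas _ B.2))).2 fun A hA =>
          h i j _ ⟨A, hA, rfl⟩ B (hπmeas _ B.2)
    filter_upwards [h'] with θ hθ i j
    refine ext_of_generate_finite π hgen.symm hπ (fun B hB => ?_) ?_
    · rw [Measure.map_apply (hX i) (hπmeas B hB), Measure.map_apply (hX j) (hπmeas B hB)]
      exact hθ i j ⟨B, hB⟩
    · rw [Measure.map_apply (hX i) .univ, Measure.map_apply (hX j) .univ, preimage_univ,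
        preimage_univ]
  · subst hF
    refine (hPd.ae_eq_iff_forall_measure_preimage_inter_eq hΘ (hX i hB) (hX j hB)).1 ?_ A hA
    filter_upwards [h] with θ hθ
    rw [← Measure.map_apply (hX i) hB, ← Measure.map_apply (hX j) hB, hθ i j]

end Family

end IsDisintegration

/-- For `I` countable and `T` countably generated, `{X_i}` is
`P`-conditionally i.i.d. given `Θ` iff for `P_Θ`-almost all `θ` the family `{X_i}`
is i.i.d. under `P_θ`. -/
theorem condIID_iff_ae_iid
    {Ω Y Ψ I : Type*} [MeasurableSpace Ω] [mY : MeasurableSpace Y] [mΨ : MeasurableSpace Ψ]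
    [MeasurableSpace.CountablyGenerated Y] [Countable I]
    (P : Measure Ω) [IsProbabilityMeasure P]
    (Θ : Ω → Ψ) (hΘ : Measurable Θ)
    (Pd : Ψ → Measure Ω) (hPdprob : ∀ θ, IsProbabilityMeasure (Pd θ))
    (hPdmeas : ∀ D : Set Ω, MeasurableSet D → Measurable fun θ => Pd θ D)
    (hPdint : ∀ D : Set Ω, MeasurableSet D → ∫⁻ θ, Pd θ D ∂(P.map Θ) = P D)
    (hPdcons : ∀ D : Set Ψ, MeasurableSet D →
      ∀ᵐ θ ∂(P.map Θ).restrict D, Pd θ (Θ ⁻¹' D) = 1)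
    (X : I → Ω → Y) (hX : ∀ i, Measurable (X i)) :
    (CondIndepFam mY P (MeasurableSpace.comap Θ mΨ) X ∧
        ∀ i j : I, ∀ F : Set Ω, MeasurableSet[MeasurableSpace.comap Θ mΨ] F →
          ∀ B : Set Y, MeasurableSet B → P (F ∩ X i ⁻¹' B) = P (F ∩ X j ⁻¹' B)) ↔
      (∀ᵐ θ ∂(P.map Θ), ProbabilityTheory.iIndepFun (m := fun _ : I => mY) X (Pd θ) ∧
        ∀ i j : I, (Pd θ).map (X i) = (Pd θ).map (X j)) := by
  have hPd : IsDisintegration P Θ Pd := ⟨hPdprob, hPdmeas, hPdint, hPdcons⟩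
  rw [hPd.condIndepFam_iff_ae_iIndepFun hΘ hX,
    hPd.forall_measure_inter_preimage_eq_iff_ae_map_eq hΘ hX, Filter.eventually_and]
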